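/- Let 𝓧 ⊆ L¹ contain all simple random variables and let ρ: 𝓧 → [−∞, ∞] be dilatation monotone with the Fatou property. If X ∈ 𝓧 and (π_n) ⊆ Π satisfies E[X|π_n] → X in the σ(L¹, 𝓛) topology, then ρ(X) = lim_n ρ(E[X|π_n]). -/

import Mathlib

open MeasureTheory Filter Topology

variable {Ω : Type*} [MeasurableSpace Ω]

/-- A finite measurable partition of `Ω` whose members have positive measure. -/
structure FinPartition (μ : Measure Ω) where
  parts : Finset (Set Ω)
  measSet : ∀ A ∈ parts, MeasurableSet A
  pairwiseDisj : ∀ A ∈ parts, ∀ B ∈ parts, A ≠ B → Disjoint A B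
  cover : ⋃ A ∈ parts, A = Set.univ
  pos : ∀ A ∈ parts, 0 < μ A

/-- Conditional expectation of `X` with respect to the finite partition `π`:
`E[X|π] = ∑_{A ∈ π} (∫_A X dμ / μ(A)) 1_A`. -/
noncomputable def pCondExp (μ : Measure Ω) (π : FinPartition μ) (X : Ω → ℝ) : Ω → ℝ :=
  fun ω => ∑ A ∈ π.parts, Set.indicator A (fun _ => (∫ x in A, X x ∂μ) / (μ A).toReal) ω

/-- A simple random variable. -/
def IsSimpleRV (X : Ω → ℝ) : Prop := Measurable X ∧ (Set.range X).Finite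

/-- Membership in the smallest ideal of `L¹` generated by `S`. -/
def MemIdeal (μ : Measure Ω) (S : Set (Ω → ℝ)) (X : Ω → ℝ) : Prop :=
  ∃ (n : ℕ) (Y : Fin n → Ω → ℝ) (l : Fin n → ℝ),
    (∀ i, Y i ∈ S) ∧ (∀ i, 0 ≤ l i) ∧ ∀ᵐ ω ∂μ, |X ω| ≤ ∑ i, l i * |Y i ω|

/-- Dilatation monotonicity of `ρ` on `𝓧`. -/
def DilMono (μ : Measure Ω) (𝓧 : Set (Ω → ℝ)) (ρ : (Ω → ℝ) → EReal) : Prop :=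
  ∀ X ∈ 𝓧, ∀ π : FinPartition μ, ρ (pCondExp μ π X) ≤ ρ X

/-- The Fatou property of `ρ` on `𝓧`. -/
def FatouProp (μ : Measure Ω) (𝓧 : Set (Ω → ℝ)) (ρ : (Ω → ℝ) → EReal) : Prop :=
  ∀ (Xn : ℕ → Ω → ℝ) (X : Ω → ℝ), (∀ n, Xn n ∈ 𝓧) → X ∈ 𝓧 →
    (∀ᵐ ω ∂μ, Tendsto (fun n => Xn n ω) atTop (nhds (X ω))) →
    (∃ Y, MemIdeal μ 𝓧 Y ∧ ∀ᵐ ω ∂μ, ∀ n, |Xn n ω| ≤ Y ω) →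
    ρ X ≤ liminf (fun n => ρ (Xn n)) atTop

/-- Convergence of a net in the `σ(L¹, 𝓛)` topology. -/
def TendstoWeakSimple (μ : Measure Ω) {ι : Type*} (l : Filter ι)
    (Xn : ι → Ω → ℝ) (X : Ω → ℝ) : Prop :=
  ∀ Z : Ω → ℝ, IsSimpleRV Z →
    Tendsto (fun i => ∫ ω, Xn i ω * Z ω ∂μ) l (nhds (∫ ω, X ω * Z ω ∂μ))

/-- The extension `ρ̄(X) = sup_{π ∈ Π} ρ(E[X|π])`. -/
noncomputable def rhoBar (μ : Measure Ω) (ρ : (Ω → ℝ) → EReal) (X : Ω → ℝ) : EReal :=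
  ⨆ π : FinPartition μ, ρ (pCondExp μ π X)

/-- The conjugate `ρ^#(Y) = sup_{X ∈ 𝓛} { E[XY] - ρ(X) }`. -/
noncomputable def sharp (μ : Measure Ω) (ρ : (Ω → ℝ) → EReal) (Y : Ω → ℝ) : EReal :=
  ⨆ X : {X : Ω → ℝ // IsSimpleRV X}, (((∫ ω, X.1 ω * Y ω ∂μ : ℝ) : EReal) - ρ X.1)

/-!
Dilatation monotonicity gives `ρ(E[X|πₙ]) ≤ ρ(X)`, so only `ρ(X) ≤ liminf ρ(E[X|πₙ])` is at stake.
For a fixed partition `σ`, the `σ(L¹, 𝓛)` convergence makes every cell average of `E[X|πₙ]`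
converge, so `E[E[X|πₙ]|σ] → E[X|σ]` pointwise and boundedly; the Fatou property and dilatation
monotonicity then give `ρ(E[X|σ]) ≤ liminf ρ(E[X|πₙ])`. It remains to find partitions `σₘ` with
`E[X|σₘ] → X` a.s. and `|E[X|σₘ]| ≤ |X| + 2`, so that the Fatou property applies once more:
cells of width `1/m` on `{|X| < m}`, and a single cell joining a tail `{|X| ≥ t}` to a band
`{c ≤ |X| < c + 1}` (with `c ≥ m`) of measure at least `∫_{|X| ≥ t} |X|`, which keeps the average
over that cell below `c + 2 ≤ |X| + 2`.
-/

section PartitionConditioning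

variable {μ : Measure Ω}

lemma FinPartition.exists_mem (σ : FinPartition μ) (ω : Ω) : ∃ A ∈ σ.parts, ω ∈ A := by
  have : ω ∈ ⋃ A ∈ σ.parts, A := σ.cover ▸ Set.mem_univ ω
  simpa using this

lemma pCondExp_eq_setAverage (σ : FinPartition μ) (X : Ω → ℝ) {A : Set Ω} {ω : Ω}
    (hA : A ∈ σ.parts) (hω : ω ∈ A) : pCondExp μ σ X ω = ⨍ x in A, X x ∂μ := by
  rw [setAverage_eq, smul_eq_mul, inv_mul_eq_div, measureReal_def, pCondExp,
    Finset.sum_eq_single_of_mem A hA, Set.indicator_of_mem hω]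
  intro B hB hBA
  exact Set.indicator_of_notMem (Set.disjoint_right.1 (σ.pairwiseDisj B hB A hA hBA) hω) _

lemma isSimpleRV_pCondExp (σ : FinPartition μ) (X : Ω → ℝ) : IsSimpleRV (pCondExp μ σ X) := by
  refine ⟨Finset.measurable_sum _ fun A hA => measurable_const.indicator (σ.measSet A hA),
    (σ.parts.image fun A => ⨍ x in A, X x ∂μ).finite_toSet.subset ?_⟩
  rintro _ ⟨ω, rfl⟩
  obtain ⟨A, hA, hωA⟩ := σ.exists_mem ω
  rw [pCondExp_eq_setAverage σ X hA hωA]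
  exact Finset.mem_image_of_mem _ hA

lemma pCondExp_congr_ae (σ : FinPartition μ) {X X' : Ω → ℝ} (h : X =ᵐ[μ] X') :
    pCondExp μ σ X = pCondExp μ σ X' := by
  funext ω
  obtain ⟨A, hA, hωA⟩ := σ.exists_mem ω
  rw [pCondExp_eq_setAverage σ X hA hωA, pCondExp_eq_setAverage σ X' hA hωA,
    setAverage_congr_fun (σ.measSet A hA) (h.mono fun _ hx _ => hx)]

end PartitionConditioning

section FiniteValued

variable {μ : Measure Ω} {ι : Type*} {g : Ω → ι}

lemma measurableSet_preimage_of_countable (hg : (Set.range g).Countable)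
    (hmeas : ∀ i, MeasurableSet (g ⁻¹' {i})) (s : Set ι) : MeasurableSet (g ⁻¹' s) := by
  have : g ⁻¹' s = ⋃ i ∈ s ∩ Set.range g, g ⁻¹' {i} := by
    ext ω
    simp
  rw [this]
  exact .biUnion (hg.mono Set.inter_subset_right) fun i _ => hmeas i

lemma ae_measure_preimage_singleton_ne_zero (hg : (Set.range g).Countable) :
    ∀ᵐ ω ∂μ, μ (g ⁻¹' {g ω}) ≠ 0 := by
  rw [ae_iff]
  refine measure_mono_null (t := ⋃ i ∈ {i ∈ Set.range g | μ (g ⁻¹' {i}) = 0}, g ⁻¹' {i}) ?_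
    ((measure_biUnion_null_iff (hg.mono (Set.sep_subset _ _))).2 fun i hi => hi.2)
  intro ω hω
  simp only [Set.mem_iUnion]
  exact ⟨g ω, ⟨⟨ω, rfl⟩, not_not.1 hω⟩, rfl⟩

lemma exists_finPartition_of_forall_ne_zero (hg : (Set.range g).Finite)
    (hmeas : ∀ i, MeasurableSet (g ⁻¹' {i})) (hpos : ∀ ω, μ (g ⁻¹' {g ω}) ≠ 0) :
    ∃ σ : FinPartition μ, ∀ X ω, pCondExp μ σ X ω = ⨍ x in g ⁻¹' {g ω}, X x ∂μ := by
  have mem_parts : ∀ {A}, A ∈ hg.toFinset.image (fun i => g ⁻¹' {i}) ↔ ∃ ω, g ⁻¹' {g ω} = A := by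
    simp
  let σ : FinPartition μ :=
    { parts := hg.toFinset.image (fun i => g ⁻¹' {i})
      measSet := by
        rintro _ hA
        obtain ⟨ω, rfl⟩ := mem_parts.1 hA
        exact hmeas _
      pairwiseDisj := by
        rintro _ hA _ hB hAB
        obtain ⟨ω, rfl⟩ := mem_parts.1 hA
        obtain ⟨ω', rfl⟩ := mem_parts.1 hB
        exact (Set.disjoint_singleton.2 fun h => hAB (by rw [h])).preimage g
      cover := Set.eq_univ_of_forall fun ω =>
        Set.mem_biUnion (mem_parts.2 ⟨ω, rfl⟩) rfl
      pos := by
        rintro _ hA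
        obtain ⟨ω, rfl⟩ := mem_parts.1 hA
        exact pos_iff_ne_zero.2 (hpos ω) }
  exact ⟨σ, fun X ω => pCondExp_eq_setAverage σ X (mem_parts.2 ⟨ω, rfl⟩) rfl⟩

/-- Null fibres cannot be parts of a `FinPartition`; they are merged into a fibre of positive
measure, which changes the fibre averages only on a null set. -/
lemma exists_finPartition_ae [NeZero μ] (hg : (Set.range g).Finite)
    (hmeas : ∀ i, MeasurableSet (g ⁻¹' {i})) :
    ∃ σ : FinPartition μ, ∀ X, ∀ᵐ ω ∂μ, pCondExp μ σ X ω = ⨍ x in g ⁻¹' {g ω}, X x ∂μ := by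
  classical
  have hae := ae_measure_preimage_singleton_ne_zero (μ := μ) hg.countable
  obtain ⟨ω₀, hω₀⟩ := hae.exists
  let merge : ι → ι := fun i => if μ (g ⁻¹' {i}) = 0 then g ω₀ else i
  have hpos_merge : ∀ i, μ (g ⁻¹' {merge i}) ≠ 0 := fun i => by
    by_cases hi : μ (g ⁻¹' {i}) = 0 <;> simp [merge, hi, hω₀]
  have hfix : ∀ i, μ (g ⁻¹' {i}) ≠ 0 → merge i = i := fun i hi => if_neg hi
  obtain ⟨σ, hσ⟩ := exists_finPartition_of_forall_ne_zero (g := merge ∘ g)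
    (Set.range_comp merge g ▸ hg.image merge)
    (fun i => measurableSet_preimage_of_countable hg.countable hmeas (merge ⁻¹' {i}))
    (fun ω h0 => hpos_merge (g ω) (measure_mono_null (fun x (hx : g x = merge (g ω)) =>
      show merge (g x) = merge (g ω) by rw [hx, hfix _ (hpos_merge _)]) h0))
  have hhg : merge ∘ g =ᵐ[μ] g := hae.mono fun ω hω => hfix _ hω
  refine ⟨σ, fun X => ?_⟩
  filter_upwards [hhg] with ω hω
  rw [hσ X ω, hω, setAverage_congr (hhg.preimage {g ω})]

end FiniteValued

section SetAverage

variable {μ : Measure Ω} [IsFiniteMeasure μ] {X : Ω → ℝ} {A : Set Ω}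

lemma abs_setAverage_sub_le (hA : MeasurableSet A) (hA0 : μ A ≠ 0) (hX : IntegrableOn X A μ)
    {y ε : ℝ} (h : ∀ x ∈ A, |X x - y| ≤ ε) : |(⨍ x in A, X x ∂μ) - y| ≤ ε := by
  have := (convex_closedBall y ε).set_average_mem Metric.isClosed_closedBall hA0
    (measure_ne_top μ A) ((ae_restrict_iff' hA).2 (.of_forall fun x hx => ?_)) hX
  · simpa [Real.dist_eq] using this
  · simpa [Real.dist_eq] using h x hx

lemma abs_setAverage_union_le (hX : Integrable X μ) {B T : Set Ω} (hT : MeasurableSet T)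
    (hBT : Disjoint B T) {K : ℝ} (hK : 0 ≤ K) (hXB : ∀ x ∈ B, |X x| ≤ K)
    (hXT : ∫ x in T, |X x| ∂μ ≤ μ.real B) :
    |⨍ x in B ∪ T, X x ∂μ| ≤ K + 1 := by
  have hBint : ∫ x in B, |X x| ∂μ ≤ K * μ.real B := by
    simpa [Real.norm_eq_abs, mul_comm] using
      (le_abs_self _).trans (norm_setIntegral_le_of_norm_le_const (f := fun x => |X x|)
        (measure_lt_top μ B) (fun x hx => by simpa using hXB x hx))
  have hint : ∫ x in B ∪ T, |X x| ∂μ ≤ (K + 1) * μ.real (B ∪ T) := calc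
    ∫ x in B ∪ T, |X x| ∂μ = (∫ x in B, |X x| ∂μ) + ∫ x in T, |X x| ∂μ :=
      setIntegral_union hBT hT hX.abs.integrableOn hX.abs.integrableOn
    _ ≤ (K + 1) * μ.real B := by linarith
    _ ≤ (K + 1) * μ.real (B ∪ T) := by gcongr; exacts [measure_ne_top μ _, Set.subset_union_left]
  rw [setAverage_eq, smul_eq_mul, abs_mul, abs_inv, abs_of_nonneg measureReal_nonneg,
    inv_mul_eq_div]
  refine div_le_of_le_mul₀ measureReal_nonneg (by linarith) ?_
  exact (abs_integral_le_integral_abs).trans hint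

end SetAverage

section ApproxCell

/-- Cells for approximating a real value `r`: `none` is the merged cell formed by the band
`c ≤ |r| < c + 1` and the tail `t ≤ |r|`; elsewhere `r` lies in the cell `⌊r q⌋` of
width `1 / q`. -/
noncomputable def approxCell (c t q r : ℝ) : Option ℤ :=
  if c ≤ |r| ∧ |r| < c + 1 ∨ t ≤ |r| then none else some ⌊r * q⌋

variable {c t q : ℝ}

lemma approxCell_preimage_none :
    approxCell c t q ⁻¹' {none} = {r | c ≤ |r| ∧ |r| < c + 1} ∪ {r | t ≤ |r|} := by
  ext r
  simp only [approxCell, Set.mem_preimage, Set.mem_singleton_iff]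
  split_ifs with h <;> simpa using h

lemma measurableSet_approxCell_preimage (i : Option ℤ) :
    MeasurableSet (approxCell c t q ⁻¹' {i}) := by
  have hnone : MeasurableSet (approxCell c t q ⁻¹' {none}) := by
    rw [approxCell_preimage_none]
    exact (measurableSet_le measurable_const measurable_id.abs).inter
      (measurableSet_lt measurable_id.abs measurable_const) |>.union
      (measurableSet_le measurable_const measurable_id.abs)
  rcases i with _ | k
  · exact hnone
  · have : approxCell c t q ⁻¹' {some k} =
        (approxCell c t q ⁻¹' {none})ᶜ ∩ {r | ⌊r * q⌋ = k} := by
      ext r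
      simp only [approxCell, Set.mem_preimage, Set.mem_singleton_iff, Set.mem_inter_iff,
        Set.mem_compl_iff]
      split_ifs <;> simp
    rw [this]
    exact hnone.compl.inter
      ((Int.measurable_floor.comp (measurable_id.mul_const q)) (measurableSet_singleton k))

lemma finite_range_approxCell (hq : 0 ≤ q) : (Set.range (approxCell c t q)).Finite := by
  refine (((Set.finite_Icc ⌊-t * q⌋ ⌊t * q⌋).image some).insert none).subset ?_
  rintro _ ⟨r, rfl⟩
  unfold approxCell
  split_ifs with h
  · exact Set.mem_insert _ _
  · have hr : |r| < t := by push Not at h; exact h.2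
    refine Set.mem_insert_of_mem _ ⟨⌊r * q⌋, ⟨Int.floor_mono ?_, Int.floor_mono ?_⟩, rfl⟩
    · exact mul_le_mul_of_nonneg_right (by linarith [neg_abs_le r]) hq
    · exact mul_le_mul_of_nonneg_right (by linarith [le_abs_self r]) hq

lemma le_abs_of_approxCell_eq_none (hct : c ≤ t) {r : ℝ} (h : approxCell c t q r = none) :
    c ≤ |r| := by
  unfold approxCell at h
  split_ifs at h with hr
  rcases hr with hr | hr
  exacts [hr.1, hct.trans hr]

lemma abs_sub_lt_of_approxCell_eq_some (hq : 0 < q) {r r' : ℝ} {k : ℤ}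
    (hr : approxCell c t q r = some k) (hr' : approxCell c t q r' = some k) :
    |r - r'| < 1 / q := by
  unfold approxCell at hr hr'
  split_ifs at hr hr'
  have := Int.abs_sub_lt_one_of_floor_eq_floor
    ((Option.some_inj.1 hr).trans (Option.some_inj.1 hr').symm)
  rw [← sub_mul, abs_mul, abs_of_pos hq] at this
  rwa [lt_div_iff₀ hq]

end ApproxCell

section Approximation

variable {μ : Measure Ω} {X : Ω → ℝ}

lemma tendsto_setIntegral_abs_tail (hXm : Measurable X) (hXi : Integrable X μ) :
    Tendsto (fun n : ℕ => ∫ ω in {ω | (n : ℝ) ≤ |X ω|}, |X ω| ∂μ) atTop (𝓝 0) := by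
  have hempty : (⋂ n : ℕ, {ω | (n : ℝ) ≤ |X ω|}) = ∅ :=
    Set.eq_empty_of_forall_notMem fun ω hω =>
      let ⟨n, hn⟩ := exists_nat_gt |X ω|
      (Set.mem_iInter.1 hω n).not_gt hn
  simpa [hempty] using tendsto_setIntegral_of_antitone
    (fun n => measurableSet_le measurable_const hXm.abs)
    (fun _ _ hmn => Set.ofPred_subset_ofPred.2 fun _ => (Nat.cast_le.2 hmn).trans)
    ⟨0, hXi.abs.integrableOn⟩

variable [IsFiniteMeasure μ]

lemma exists_ballast (hXm : Measurable X) (hXi : Integrable X μ) (M : ℝ) :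
    ∃ c t : ℝ, M ≤ c ∧ c + 1 ≤ t ∧ (μ {ω | M ≤ |X ω|} ≠ 0 →
      ∫ ω in {ω | t ≤ |X ω|}, |X ω| ∂μ ≤ μ.real {ω | c ≤ |X ω| ∧ |X ω| < c + 1}) := by
  by_cases hM : μ {ω | M ≤ |X ω|} = 0
  · exact ⟨M, M + 1, le_rfl, le_rfl, absurd hM⟩
  have hband : ∃ j : ℕ, μ {ω | M + j ≤ |X ω| ∧ |X ω| < M + j + 1} ≠ 0 := by
    by_contra! h
    refine hM (measure_mono_null ?_ (measure_iUnion_null h))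
    intro ω (hω : M ≤ |X ω|)
    refine Set.mem_iUnion.2 ⟨⌊|X ω| - M⌋₊, ?_, ?_⟩
    · linarith [Nat.floor_le (sub_nonneg.2 hω)]
    · linarith [Nat.lt_floor_add_one (|X ω| - M)]
  obtain ⟨j, hj⟩ := hband
  have hpos : 0 < μ.real {ω | M + j ≤ |X ω| ∧ |X ω| < M + j + 1} :=
    ENNReal.toReal_pos hj (measure_ne_top μ _)
  obtain ⟨n, hn, hnj⟩ := (((tendsto_setIntegral_abs_tail hXm hXi).eventually_le_const hpos).and
    (eventually_ge_atTop (⌈M + j + 1⌉₊))).exists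
  exact ⟨M + j, n, by simp, Nat.ceil_le.1 hnj, fun _ => hn⟩

lemma exists_pCondExp_approx [NeZero μ] (hXm : Measurable X) (hXi : Integrable X μ)
    {M : ℝ} (hM : 1 ≤ M) : ∃ σ : FinPartition μ, ∀ᵐ ω ∂μ,
      (|X ω| < M → |pCondExp μ σ X ω - X ω| ≤ 1 / M) ∧ |pCondExp μ σ X ω| ≤ |X ω| + 2 := by
  obtain ⟨c, t, hMc, hct, htail⟩ := exists_ballast hXm hXi M
  set g := approxCell c t M ∘ X
  have hgfin : (Set.range g).Finite :=
    (finite_range_approxCell (by linarith)).subset (Set.range_comp_subset_range _ _)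
  obtain ⟨σ, hσ⟩ := exists_finPartition_ae (μ := μ) hgfin
    fun i => hXm (measurableSet_approxCell_preimage i)
  refine ⟨σ, ?_⟩
  filter_upwards [hσ X, ae_measure_preimage_singleton_ne_zero hgfin.countable] with ω hω hpos
  rw [hω]
  rcases hgω : g ω with _ | k
  · have hcω : c ≤ |X ω| := le_abs_of_approxCell_eq_none (by linarith) hgω
    have hcell : g ⁻¹' {none} = {x | c ≤ |X x| ∧ |X x| < c + 1} ∪ {x | t ≤ |X x|} := by
      rw [Set.preimage_comp, approxCell_preimage_none]
      rfl
    rw [hgω] at hpos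
    have hMpos : μ {x | M ≤ |X x|} ≠ 0 := fun h0 => hpos (measure_mono_null (fun x hx =>
      hMc.trans (le_abs_of_approxCell_eq_none (by linarith) hx)) h0)
    refine ⟨fun h => absurd hcω (by linarith), ?_⟩
    have := abs_setAverage_union_le (B := {x | c ≤ |X x| ∧ |X x| < c + 1}) hXi
      (measurableSet_le measurable_const hXm.abs)
      (Set.disjoint_left.2 fun x hx (hx' : t ≤ |X x|) => by linarith [hx.2])
      (by linarith) (fun x (hx : c ≤ |X x| ∧ |X x| < c + 1) => hx.2.le) (htail hMpos)
    rw [hcell]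
    linarith
  · have hclose : ∀ x ∈ g ⁻¹' {some k}, |X x - X ω| ≤ 1 / M := fun x hx =>
      (abs_sub_lt_of_approxCell_eq_some (by linarith) hx hgω).le
    rw [hgω] at hpos
    have := abs_setAverage_sub_le (A := g ⁻¹' {some k})
      (hXm (measurableSet_approxCell_preimage _)) hpos hXi.integrableOn hclose
    have hM1 : 1 / M ≤ 1 := by rw [div_le_one (by linarith)]; exact hM
    refine ⟨fun _ => this, ?_⟩
    linarith [abs_sub_abs_le_abs_sub (⨍ x in g ⁻¹' {some k}, X x ∂μ) (X ω)]

lemma exists_seq_pCondExp_tendsto_ae [NeZero μ] (hXi : Integrable X μ) :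
    ∃ σ : ℕ → FinPartition μ,
      (∀ᵐ ω ∂μ, Tendsto (fun m => pCondExp μ (σ m) X ω) atTop (𝓝 (X ω))) ∧
      ∀ᵐ ω ∂μ, ∀ m, |pCondExp μ (σ m) X ω| ≤ |X ω| + 2 := by
  set X' := hXi.aemeasurable.mk X
  have hXX' : X =ᵐ[μ] X' := hXi.aemeasurable.ae_eq_mk
  choose σ hσ using fun m : ℕ => exists_pCondExp_approx hXi.aemeasurable.measurable_mk
    (hXi.congr hXX') (M := m + 1) (by simp)
  simp_rw [pCondExp_congr_ae _ hXX']
  have hσ' := ae_all_iff.2 hσ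
  refine ⟨σ, ?_, ?_⟩
  · filter_upwards [hXX', hσ'] with ω hω hσω
    rw [hω, ← tendsto_sub_nhds_zero_iff]
    refine squeeze_zero_norm' ?_ tendsto_one_div_add_atTop_nhds_zero_nat
    filter_upwards [eventually_gt_atTop ⌈|X' ω|⌉₊] with m hm
    exact (hσω m).1 (by linarith [Nat.le_ceil |X' ω|, (Nat.cast_lt (α := ℝ)).2 hm])
  · filter_upwards [hXX', hσ'] with ω hω hσω m
    exact hω ▸ (hσω m).2

end Approximation

section WeakConvergence

variable {μ : Measure Ω} {ι : Type*} {l : Filter ι} {Y : ι → Ω → ℝ} {X : Ω → ℝ}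

lemma isSimpleRV_indicator_one {A : Set Ω} (hA : MeasurableSet A) :
    IsSimpleRV (A.indicator (1 : Ω → ℝ)) :=
  ⟨measurable_one.indicator hA, (Set.toFinite {1, 0}).subset <| by
    rintro _ ⟨ω, rfl⟩
    by_cases hω : ω ∈ A <;> simp [hω]⟩

lemma TendstoWeakSimple.tendsto_setAverage (h : TendstoWeakSimple μ l Y X) {A : Set Ω}
    (hA : MeasurableSet A) :
    Tendsto (fun i => ⨍ x in A, Y i x ∂μ) l (𝓝 (⨍ x in A, X x ∂μ)) := by
  have hint : ∀ f : Ω → ℝ, ∫ ω, f ω * A.indicator 1 ω ∂μ = ∫ ω in A, f ω ∂μ := fun f => by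
    simp_rw [← Set.indicator_mul_right, Pi.one_apply, mul_one, integral_indicator hA]
  have := h _ (isSimpleRV_indicator_one hA)
  simp only [hint] at this
  simpa only [setAverage_eq] using this.const_smul (μ.real A)⁻¹

lemma TendstoWeakSimple.tendsto_pCondExp (h : TendstoWeakSimple μ l Y X) (σ : FinPartition μ)
    (ω : Ω) : Tendsto (fun i => pCondExp μ σ (Y i) ω) l (𝓝 (pCondExp μ σ X ω)) := by
  obtain ⟨A, hA, hωA⟩ := σ.exists_mem ω
  simpa only [pCondExp_eq_setAverage σ _ hA hωA] using h.tendsto_setAverage (σ.measSet A hA)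

lemma TendstoWeakSimple.exists_abs_pCondExp_le {Y : ℕ → Ω → ℝ}
    (h : TendstoWeakSimple μ atTop Y X) (σ : FinPartition μ) :
    ∃ C, ∀ n ω, |pCondExp μ σ (Y n) ω| ≤ C := by
  have hsum : Tendsto (fun n => ∑ A ∈ σ.parts, |⨍ x in A, Y n x ∂μ|) atTop
      (𝓝 (∑ A ∈ σ.parts, |⨍ x in A, X x ∂μ|)) :=
    tendsto_finsetSum _ fun A hA => (h.tendsto_setAverage (σ.measSet A hA)).abs
  obtain ⟨C, hC⟩ := hsum.bddAbove_range
  refine ⟨C, fun n ω => ?_⟩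
  obtain ⟨A, hA, hωA⟩ := σ.exists_mem ω
  rw [pCondExp_eq_setAverage σ _ hA hωA]
  exact (Finset.single_le_sum (fun B _ => abs_nonneg (⨍ x in B, Y n x ∂μ)) hA).trans
    (hC ⟨n, rfl⟩)

end WeakConvergence

section RiskMeasure

variable {μ : Measure Ω} {𝓧 : Set (Ω → ℝ)} {ρ : (Ω → ℝ) → EReal}

lemma isSimpleRV_const (a : ℝ) : IsSimpleRV (fun _ : Ω => a) :=
  ⟨measurable_const, (Set.finite_singleton a).subset (Set.range_const_subset)⟩

lemma memIdeal_of_abs_le {X Y : Ω → ℝ} (hX : X ∈ 𝓧) (h1 : (fun _ => (1 : ℝ)) ∈ 𝓧) {a b : ℝ}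
    (ha : 0 ≤ a) (hb : 0 ≤ b) (hY : ∀ᵐ ω ∂μ, |Y ω| ≤ a * |X ω| + b) : MemIdeal μ 𝓧 Y :=
  ⟨2, ![X, fun _ => 1], ![a, b], fun i => by fin_cases i <;> assumption,
    fun i => by fin_cases i <;> assumption, by simpa [Fin.sum_univ_two] using hY⟩

lemma memIdeal_const (h1 : (fun _ => (1 : ℝ)) ∈ 𝓧) (C : ℝ) : MemIdeal μ 𝓧 (fun _ => C) :=
  memIdeal_of_abs_le h1 h1 le_rfl (abs_nonneg C) (.of_forall fun _ => by simp)

lemma rho_pCondExp_le_liminf (h𝓛 : ∀ Z : Ω → ℝ, IsSimpleRV Z → Z ∈ 𝓧)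
    (hdil : DilMono μ 𝓧 ρ) (hFatou : FatouProp μ 𝓧 ρ) {Y : ℕ → Ω → ℝ} {X : Ω → ℝ}
    (hY : ∀ n, Y n ∈ 𝓧) (h : TendstoWeakSimple μ atTop Y X) (σ : FinPartition μ) :
    ρ (pCondExp μ σ X) ≤ liminf (fun n => ρ (Y n)) atTop := by
  obtain ⟨C, hC⟩ := h.exists_abs_pCondExp_le σ
  calc ρ (pCondExp μ σ X) ≤ liminf (fun n => ρ (pCondExp μ σ (Y n))) atTop :=
        hFatou _ _ (fun n => h𝓛 _ (isSimpleRV_pCondExp σ _)) (h𝓛 _ (isSimpleRV_pCondExp σ X))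
          (.of_forall (h.tendsto_pCondExp σ))
          ⟨_, memIdeal_const (h𝓛 _ (isSimpleRV_const 1)) C, .of_forall fun ω n => hC n ω⟩
    _ ≤ liminf (fun n => ρ (Y n)) atTop :=
        liminf_le_liminf (.of_forall fun n => hdil _ (hY n) σ)

end RiskMeasure

theorem stmt5_general (μ : Measure Ω) [IsProbabilityMeasure μ]
    (𝓧 : Set (Ω → ℝ)) (h𝓧L1 : ∀ X ∈ 𝓧, Integrable X μ)
    (h𝓛 : ∀ Z : Ω → ℝ, IsSimpleRV Z → Z ∈ 𝓧)
    (ρ : (Ω → ℝ) → EReal)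
    (hdil : DilMono μ 𝓧 ρ) (hFatou : FatouProp μ 𝓧 ρ)
    (X : Ω → ℝ) (hX : X ∈ 𝓧) (π : ℕ → FinPartition μ)
    (hconv : TendstoWeakSimple μ atTop (fun n => pCondExp μ (π n) X) X) :
    Tendsto (fun n => ρ (pCondExp μ (π n) X)) atTop (nhds (ρ X)) := by
  set L := liminf (fun n => ρ (pCondExp μ (π n) X)) atTop
  have h1 : (fun _ => (1 : ℝ)) ∈ 𝓧 := h𝓛 _ (isSimpleRV_const 1)
  obtain ⟨σ, hσX, hσdom⟩ := exists_seq_pCondExp_tendsto_ae (h𝓧L1 X hX)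
  have hdom : MemIdeal μ 𝓧 (fun ω => |X ω| + 2) :=
    memIdeal_of_abs_le hX h1 zero_le_one zero_le_two
      (.of_forall fun ω => by rw [one_mul, abs_of_nonneg (by positivity)])
  have hσL : ∀ m, ρ (pCondExp μ (σ m) X) ≤ L := fun m =>
    rho_pCondExp_le_liminf h𝓛 hdil hFatou (fun n => h𝓛 _ (isSimpleRV_pCondExp _ _)) hconv (σ m)
  have hlower : ρ X ≤ L := calc
    ρ X ≤ liminf (fun m => ρ (pCondExp μ (σ m) X)) atTop :=
      hFatou _ X (fun m => h𝓛 _ (isSimpleRV_pCondExp _ _)) hX hσX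
        ⟨_, hdom, hσdom⟩
    _ ≤ L := (liminf_le_liminf (.of_forall hσL)).trans (liminf_const L).le
  have hupper : limsup (fun n => ρ (pCondExp μ (π n) X)) atTop ≤ ρ X :=
    limsup_le_of_le (h := .of_forall fun n => hdil X hX (π n))
  exact tendsto_of_le_liminf_of_limsup_le hlower hupper

/-- If `ρ` on `𝓧 ⊇ 𝓛` is dilatation monotone with the Fatou property,
`X ∈ 𝓧` and `E[X|π n] → X` in the `σ(L¹, 𝓛)` topology, then `ρ(E[X|π n]) → ρ(X)`. -/
theorem stmt5 (μ : Measure Ω) [IsProbabilityMeasure μ] [NullSingletonClass μ]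
    (𝓧 : Set (Ω → ℝ)) (h𝓧L1 : ∀ X ∈ 𝓧, Integrable X μ)
    (h𝓛 : ∀ Z : Ω → ℝ, IsSimpleRV Z → Z ∈ 𝓧)
    (ρ : (Ω → ℝ) → EReal)
    (hdil : DilMono μ 𝓧 ρ) (hFatou : FatouProp μ 𝓧 ρ)
    (X : Ω → ℝ) (hX : X ∈ 𝓧) (π : ℕ → FinPartition μ)
    (hconv : TendstoWeakSimple μ atTop (fun n => pCondExp μ (π n) X) X) :
    Tendsto (fun n => ρ (pCondExp μ (π n) X)) atTop (nhds (ρ X)) :=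
  stmt5_general μ 𝓧 h𝓧L1 h𝓛 ρ hdil hFatou X hX π hconv
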